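/- Let C ⊆ ℂ be a compact convex set with 0 in its relative interior and p > -dim C nonzero. Then the complex L_p-intersection body map satisfies I_{C,p}(ΘK) = |det Θ|^{-2/p} Θ^{-*} I_{C,p}(K) for every star body K in ℂⁿ and every Θ ∈ GL(n,ℂ), where Θ^{-*} is the inverse of the Hermitian adjoint of Θ. -/

import Mathlib

open MeasureTheory Metric Filter Pointwise
set_option synthInstance.maxHeartbeats 1000000
set_option maxHeartbeats 1000000
noncomputable section

/-- ℂⁿ with its Euclidean structure (≅ ℝ²ⁿ as a real inner product space). -/
abbrev Cn (n : ℕ) := EuclideanSpace ℂ (Fin n)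

instance {n : ℕ} : MeasurableSpace (Cn n) := WithLp.measurableSpace _ _
instance {n : ℕ} : BorelSpace (Cn n) := PiLp.borelSpace _
instance {n : ℕ} : InnerProductSpace ℝ (Cn n) := InnerProductSpace.complexToReal
instance {n : ℕ} (W : Submodule ℂ (Cn n)) : InnerProductSpace ℝ W :=
  InnerProductSpace.complexToReal

/-- The complex inner product `x · u`, conjugate-linear in `u`
(so that `x · (λ u) = conj λ (x · u)`), whose real part is the real
inner product `⟨x,u⟩` on ℂⁿ ≅ ℝ²ⁿ. -/
def dotC {n : ℕ} (x u : Cn n) : ℂ := inner ℂ u x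

/-- Support function of a set `C ⊆ ℂ ≅ ℝ²` at `z`:  `h_C(z) = sup_{c ∈ C} ⟨c, z⟩`. -/
def hsC (C : Set ℂ) (z : ℂ) : ℝ := sSup ((fun c => ((starRingEnd ℂ) c * z).re) '' C)

/-- Radial function of a set. -/
def radial {E : Type*} [SMul ℝ E] (K : Set E) (x : E) : ℝ :=
  sSup {t : ℝ | 0 ≤ t ∧ t • x ∈ K}

/-- `K` is a star body: compact, star-shaped about the origin, with continuous positive
radial function. -/
def IsStarBody {n : ℕ} (K : Set (Cn n)) : Prop :=
  IsCompact K ∧ (∀ x ∈ K, ∀ t : ℝ, 0 ≤ t → t ≤ 1 → t • x ∈ K) ∧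
    (Continuous fun v : sphere (0 : Cn n) 1 => radial K (v : Cn n)) ∧
    (∀ x : Cn n, x ≠ 0 → 0 < radial K x)

/-- Spherical Lebesgue (surface) measure on the unit sphere `S^{2n-1} ⊆ ℂⁿ`. -/
def sphMeas (n : ℕ) : Measure (sphere (0 : Cn n) 1) := (volume : Measure (Cn n)).toSphere

/-- Arc-length measure on the unit circle `S¹ ⊆ ℂ`. -/
def circMeas : Measure (sphere (0 : ℂ) 1) := (volume : Measure ℂ).toSphere

/-- Dimension of a subset of ℂ (dimension of the direction of its affine span). -/
def dimC (C : Set ℂ) : ℕ := Module.finrank ℝ (affineSpan ℝ C).direction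

/-- The complex L_p-intersection body of K, as a star-shaped set: its radial function
satisfies ρ(u)^{-p} = ∫_K h_C(x·u)^p dx.  Since x ↦ ∫_K h_C(y·x)^p dy is
p-homogeneous, membership of x ≠ 0 is equivalent to the inequality below
(direction of the inequality depending on the sign of p). -/
def cLpIntBody {n : ℕ} (C : Set ℂ) (p : ℝ) (K : Set (Cn n)) : Set (Cn n) :=
  {x : Cn n | x = 0 ∨
    (0 < p ∧ (∫ y in K, hsC C (dotC y x) ^ p) ≤ 1) ∨
    (p < 0 ∧ 1 ≤ ∫ y in K, hsC C (dotC y x) ^ p)}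


open Matrix in
lemma det_realify {ι : Type*} [Fintype ι] [DecidableEq ι] (M : Matrix ι ι ℂ) :
    (Matrix.fromBlocks (M.map Complex.re) (-(M.map Complex.im))
        (M.map Complex.im) (M.map Complex.re)).det = Complex.normSq M.det := by
  classical
  set R : Matrix ι ι ℂ := (M.map Complex.re).map (fun r : ℝ => (r : ℂ)) with hR
  set S : Matrix ι ι ℂ := (M.map Complex.im).map (fun r : ℝ => (r : ℂ)) with hS
  set A : Matrix (ι ⊕ ι) (ι ⊕ ι) ℝ := Matrix.fromBlocks (M.map Complex.re) (-(M.map Complex.im))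
        (M.map Complex.im) (M.map Complex.re) with hA
  have hmap : Complex.ofRealHom.mapMatrix A = Matrix.fromBlocks R (-S) S R := by
    ext (i | i) (j | j) <;>
      simp [hA, hR, hS, Matrix.map_apply]
  set E : Matrix (ι ⊕ ι) (ι ⊕ ι) ℂ := Matrix.fromBlocks 1 (Complex.I • 1) 0 1 with hE
  set F : Matrix (ι ⊕ ι) (ι ⊕ ι) ℂ := Matrix.fromBlocks 1 (-(Complex.I • 1)) 0 1 with hF
  have hEdet : E.det = 1 := by rw [hE, Matrix.det_fromBlocks_zero₂₁]; simp
  have hFdet : F.det = 1 := by rw [hF, Matrix.det_fromBlocks_zero₂₁]; simp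
  have hprod : E * (Matrix.fromBlocks R (-S) S R) * F
      = Matrix.fromBlocks M 0 S (M.map (starRingEnd ℂ)) := by
    rw [hE, hF, Matrix.fromBlocks_multiply, Matrix.fromBlocks_multiply]
    ext (i | i) (j | j) <;>
      simp [hR, hS, Matrix.map_apply, Matrix.add_apply, Matrix.neg_apply, Matrix.smul_apply,
        Matrix.mul_apply, Complex.ext_iff, smul_eq_mul] <;>
      ring
  have hc : (Complex.ofRealHom A.det : ℂ) = Complex.normSq M.det := by
    rw [RingHom.map_det, hmap]
    have : (Matrix.fromBlocks R (-S) S R).det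
        = (E * (Matrix.fromBlocks R (-S) S R) * F).det := by
      rw [Matrix.det_mul, Matrix.det_mul, hEdet, hFdet, one_mul, mul_one]
    rw [this, hprod, Matrix.det_fromBlocks_zero₁₂]
    have h2 : (M.map (starRingEnd ℂ)).det = starRingEnd ℂ M.det := by
      exact (RingHom.map_det (starRingEnd ℂ) M).symm
    rw [h2, Complex.mul_conj]
  simpa using hc

def sigmaFin2Equiv {ι : Type*} : (Σ _ : ι, Fin 2) ≃ ι ⊕ ι where
  toFun x := if x.2 = 0 then Sum.inl x.1 else Sum.inr x.1
  invFun x := x.elim (fun i => ⟨i, 0⟩) (fun i => ⟨i, 1⟩)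
  left_inv := by rintro ⟨i, j⟩; fin_cases j <;> simp
  right_inv := by rintro (i | i) <;> simp

lemma det_restrictScalars_pi {ι : Type*} [Fintype ι] [DecidableEq ι]
    (g : (ι → ℂ) →ₗ[ℂ] (ι → ℂ)) :
    LinearMap.det (g.restrictScalars ℝ) = Complex.normSq (LinearMap.det g) := by
  classical
  set M := LinearMap.toMatrix (Pi.basisFun ℂ ι) (Pi.basisFun ℂ ι) g with hM
  have hdetg : LinearMap.det g = M.det := (LinearMap.det_toMatrix _ g).symm
  set PB : Module.Basis ((_ : ι) × Fin 2) ℝ (ι → ℂ) := Pi.basis (fun _ : ι => Complex.basisOneI) with hPB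
  have hdetr : LinearMap.det (g.restrictScalars ℝ)
      = (LinearMap.toMatrix PB PB (g.restrictScalars ℝ)).det :=
    (LinearMap.det_toMatrix _ _).symm
  have hg1 : ∀ i k, g (Pi.single i 1) k = M k i := by
    intro i k
    rw [hM, LinearMap.toMatrix_apply, Pi.basisFun_apply]
    simp [Pi.basisFun_repr]
  have hN : LinearMap.toMatrix PB PB (g.restrictScalars ℝ)
      = (Matrix.fromBlocks (M.map Complex.re) (-(M.map Complex.im))
          (M.map Complex.im) (M.map Complex.re)).submatrix sigmaFin2Equiv sigmaFin2Equiv := by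
    ext ⟨k, l⟩ ⟨i, j⟩
    rw [LinearMap.toMatrix_apply]
    have hb : PB ⟨i, j⟩ = Pi.single i (Complex.basisOneI j) := by
      rw [hPB, Pi.basis_apply]
    have hsingle : Pi.single (M := fun _ : ι => ℂ) i (Complex.basisOneI j)
        = Complex.basisOneI j • Pi.single (M := fun _ : ι => ℂ) i (1 : ℂ) := by
      rw [← Pi.single_smul]; simp
    have hval : (g.restrictScalars ℝ) (PB ⟨i, j⟩) = Complex.basisOneI j • g (Pi.single (M := fun _ : ι => ℂ) i (1 : ℂ)) := by
      rw [hb, hsingle]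
      simp
    rw [hval, hPB]
    rw [Pi.basis_repr]
    have : (Complex.basisOneI j • g (Pi.single (M := fun _ : ι => ℂ) i (1:ℂ))) k = Complex.basisOneI j * M k i := by
      rw [Pi.smul_apply, hg1, smul_eq_mul]
    rw [this]
    have hrep : ∀ z : ℂ, ⇑(Complex.basisOneI.repr z) = ![z.re, z.im] := Complex.coe_basisOneI_repr
    fin_cases j <;> fin_cases l <;>
      simp [hrep, sigmaFin2Equiv, Complex.coe_basisOneI, Matrix.map_apply]
  rw [hdetr, hN, Matrix.det_submatrix_equiv_self, det_realify, hdetg]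
lemma det_restrictScalars_Cn {n : ℕ} (f : EuclideanSpace ℂ (Fin n) →ₗ[ℂ] EuclideanSpace ℂ (Fin n)) :
    LinearMap.det (f.restrictScalars ℝ) = Complex.normSq (LinearMap.det f) := by
  set φ : EuclideanSpace ℂ (Fin n) ≃ₗ[ℂ] (Fin n → ℂ) := WithLp.linearEquiv 2 ℂ (Fin n → ℂ) with hφ
  set g : (Fin n → ℂ) →ₗ[ℂ] (Fin n → ℂ) :=
    (φ : EuclideanSpace ℂ (Fin n) →ₗ[ℂ] (Fin n → ℂ)) ∘ₗ f ∘ₗ (φ.symm : (Fin n → ℂ) →ₗ[ℂ] EuclideanSpace ℂ (Fin n)) with hg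
  have h1 : LinearMap.det g = LinearMap.det f := LinearMap.det_conj f φ
  have h2 : g.restrictScalars ℝ
      = ((φ.restrictScalars ℝ : EuclideanSpace ℂ (Fin n) ≃ₗ[ℝ] (Fin n → ℂ))
          : EuclideanSpace ℂ (Fin n) →ₗ[ℝ] (Fin n → ℂ)) ∘ₗ (f.restrictScalars ℝ) ∘ₗ
        (((φ.restrictScalars ℝ : EuclideanSpace ℂ (Fin n) ≃ₗ[ℝ] (Fin n → ℂ)).symm)
          : (Fin n → ℂ) →ₗ[ℝ] EuclideanSpace ℂ (Fin n)) := by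
    ext x
    rfl
  have h3 : LinearMap.det (g.restrictScalars ℝ) = LinearMap.det (f.restrictScalars ℝ) := by
    rw [h2]; exact LinearMap.det_conj _ _
  rw [← h3, det_restrictScalars_pi, h1]

lemma hsC_nonneg {C : Set ℂ} (hCcpt : IsCompact C) (h0 : (0:ℂ) ∈ C) (z : ℂ) : 0 ≤ hsC C z := by
  have hcont : Continuous fun c : ℂ => ((starRingEnd ℂ) c * z).re :=
    Complex.continuous_re.comp ((Complex.continuous_conj).mul continuous_const)
  exact le_csSup (hCcpt.image hcont).bddAbove ⟨0, h0, by simp⟩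

lemma hsC_smul (C : Set ℂ) {s : ℝ} (hs : 0 ≤ s) (w : ℂ) :
    hsC C ((s : ℂ) * w) = s * hsC C w := by
  unfold hsC
  have h0 : (fun c : ℂ => ((starRingEnd ℂ) c * ((s:ℂ) * w)).re)
      = fun c : ℂ => s • (((starRingEnd ℂ) c * w).re) := by
    funext c
    rw [mul_left_comm, smul_eq_mul, Complex.re_ofReal_mul]
  rw [h0]
  have h1 : (fun c : ℂ => s • (((starRingEnd ℂ) c * w).re)) '' C
      = s • ((fun c : ℂ => ((starRingEnd ℂ) c * w).re) '' C) := by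
    rw [← Set.image_smul, Set.image_image]
  rw [h1, Real.sSup_smul_of_nonneg hs, smul_eq_mul]

/-- GL(n,ℂ)-contravariance,
I_{C,p}(ΘK) = |det Θ|^{-2/p} Θ^{-*} I_{C,p}(K). -/
theorem cLpIntBody_linear_contravariance (n : ℕ) (C : Set ℂ) (hCcpt : IsCompact C)
    (hCconv : Convex ℝ C) (hCne : C.Nonempty) (hC0 : (0 : ℂ) ∈ intrinsicInterior ℝ C)
    (p : ℝ) (hp0 : p ≠ 0) (hp : -(dimC C : ℝ) < p)
    (K : Set (Cn n)) (hK : IsStarBody K) (Θ : Cn n ≃ₗ[ℂ] Cn n) :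
    cLpIntBody C p ((Θ : Cn n →ₗ[ℂ] Cn n) '' K)
      = (‖LinearMap.det (Θ : Cn n →ₗ[ℂ] Cn n)‖ ^ (-2 / p)) •
          (⇑(LinearMap.adjoint (Θ.symm : Cn n →ₗ[ℂ] Cn n)) '' cLpIntBody C p K) := by
  classical
  set A : Cn n →ₗ[ℂ] Cn n := (Θ : Cn n →ₗ[ℂ] Cn n) with hA
  set Ad : Cn n →ₗ[ℂ] Cn n := LinearMap.adjoint A with hAd
  set B : Cn n →ₗ[ℂ] Cn n := LinearMap.adjoint (Θ.symm : Cn n →ₗ[ℂ] Cn n) with hB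
  have hidadj : LinearMap.adjoint (LinearMap.id : Cn n →ₗ[ℂ] Cn n) = LinearMap.id :=
    ((LinearMap.eq_adjoint_iff LinearMap.id LinearMap.id).mpr (fun x y => rfl)).symm
  have hcomp1 : A ∘ₗ (Θ.symm : Cn n →ₗ[ℂ] Cn n) = LinearMap.id := by
    ext v; simp [hA]
  have hcomp2 : (Θ.symm : Cn n →ₗ[ℂ] Cn n) ∘ₗ A = LinearMap.id := by
    ext v; simp [hA]
  have hBA : ∀ v, B (Ad v) = v := by
    intro v
    have h := congrArg LinearMap.adjoint hcomp1
    rw [LinearMap.adjoint_comp, hidadj] at h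
    simpa using LinearMap.ext_iff.mp h v
  have hAB : ∀ v, Ad (B v) = v := by
    intro v
    have h := congrArg LinearMap.adjoint hcomp2
    rw [LinearMap.adjoint_comp, hidadj] at h
    simpa using LinearMap.ext_iff.mp h v
  have hdet0 : LinearMap.det A ≠ 0 := Θ.isUnit_det'.ne_zero
  set D : ℝ := ‖LinearMap.det A‖ with hD
  have hDpos : 0 < D := norm_pos_iff.mpr hdet0
  set c : ℝ := D ^ (-2 / p) with hc
  have hcpos : 0 < c := Real.rpow_pos_of_pos hDpos _
  have hcinv : c⁻¹ = D ^ (2 / p) := by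
    rw [hc, neg_div, Real.rpow_neg hDpos.le, inv_inv]
  have hcp : c⁻¹ ^ p = D ^ (2:ℕ) := by
    rw [hcinv, ← Real.rpow_natCast D 2, ← Real.rpow_mul hDpos.le]
    congr 1
    field_simp
    norm_num
  have hC0' : (0:ℂ) ∈ C := intrinsicInterior_subset hC0
  have hns : ∀ z, 0 ≤ hsC C z := hsC_nonneg hCcpt hC0'
  have hKm : MeasurableSet K := hK.1.measurableSet
  have key : ∀ x : Cn n, (∫ y in (⇑A '' K), hsC C (dotC y x) ^ p)
      = ∫ y in K, hsC C (dotC y (c⁻¹ • Ad x)) ^ p := by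
    intro x
    set T : Cn n →L[ℝ] Cn n := LinearMap.toContinuousLinearMap (A.restrictScalars ℝ) with hT
    have hfd : ∀ y ∈ K, HasFDerivWithinAt (⇑A) T K y := fun y _ =>
      T.hasFDerivAt.hasFDerivWithinAt
    have hinj : Set.InjOn (⇑A) K := Function.Injective.injOn Θ.injective
    have h1 := integral_image_eq_integral_abs_det_fderiv_smul volume hKm
      (f' := fun _ => T) (fun y hy => hfd y hy) hinj (fun y => hsC C (dotC y x) ^ p)
    rw [h1]
    have hTdet : T.det = D ^ (2:ℕ) := by
      have h2 : T.toLinearMap = A.restrictScalars ℝ := LinearMap.coe_toContinuousLinearMap _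
      rw [ContinuousLinearMap.det, h2, det_restrictScalars_Cn, ← Complex.sq_norm, hD]
    have e1 : ∀ y, dotC (A y) x = dotC y (Ad x) := by
      intro y
      unfold dotC
      exact (LinearMap.adjoint_inner_left A y x).symm
    have e2 : ∀ y : Cn n, dotC y (c⁻¹ • Ad x) = ((c⁻¹ : ℝ) : ℂ) * dotC y (Ad x) := by
      intro y
      unfold dotC
      have hsm : (c⁻¹ : ℝ) • Ad x = ((c⁻¹ : ℝ) : ℂ) • Ad x := by
        rw [← algebraMap_smul ℂ (c⁻¹ : ℝ) (Ad x), Complex.coe_algebraMap]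
      rw [hsm, inner_smul_left, Complex.conj_ofReal]
    refine integral_congr_ae (Filter.Eventually.of_forall fun y => ?_)
    show |T.det| • hsC C (dotC (A y) x) ^ p = hsC C (dotC y (c⁻¹ • Ad x)) ^ p
    rw [smul_eq_mul, hTdet, abs_of_nonneg (by positivity), e1 y, e2 y,
      hsC_smul C (inv_nonneg.mpr hcpos.le),
      Real.mul_rpow (inv_nonneg.mpr hcpos.le) (hns _), hcp]
  ext x
  rw [Set.mem_smul_set_iff_inv_smul_mem₀ hcpos.ne']
  have himg : c⁻¹ • x ∈ ⇑B '' (cLpIntBody C p K) ↔ c⁻¹ • Ad x ∈ cLpIntBody C p K := by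
    constructor
    · rintro ⟨w, hw, hwx⟩
      have h4 : c⁻¹ • Ad x = Ad (c⁻¹ • x) := (LinearMap.map_smul_of_tower Ad c⁻¹ x).symm
      rw [h4, ← hwx, hAB]
      exact hw
    · intro h
      exact ⟨c⁻¹ • Ad x, h, by rw [LinearMap.map_smul_of_tower, hBA]⟩
  rw [himg]
  have hzero : x = 0 ↔ c⁻¹ • Ad x = 0 := by
    constructor
    · rintro rfl; simp
    · intro h
      have h5 : Ad x = 0 := by
        rcases smul_eq_zero.mp h with h' | h'
        · exact absurd h' (inv_ne_zero hcpos.ne')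
        · exact h'
      have h6 := hBA x
      rw [h5, map_zero] at h6
      exact h6.symm
  simp only [cLpIntBody, Set.mem_setOf_eq, key x, hzero]
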